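/- arXiv:2602.04878 — 3 statements merged into one kernel-verified Lean document; each statement's English description precedes it below -/
import Mathlib

section
/- For real τ > 0 and positive integers k < L, the binomial tail Σ_{j=k+1}^{L} C(L,j) cosh(τ)^{L−j} sinh(τ)^j is bounded above by e^{τL} · (eLτ/k)^k, provided k > eLτ. -/
/-!
Since `cosh τ + sinh τ = e^τ`, the summand is `e^{τL}` times the probability that
`X ∼ Bin(L, p)` equals `j`, where `p = sinh τ / e^τ ≤ τ`. The tail `X ≥ k` is at most the
expected number `C(L,k) p^k` of `k`-subsets of successes, and `C(L,k) ≤ (eL/k)^k`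
because `k^k/k! ≤ e^k`.
-/

open Finset Real Nat

theorem Nat.choose_le_choose_mul_choose {n m j : ℕ} (hmj : m ≤ j) :
    n.choose j ≤ n.choose m * (n - m).choose (j - m) :=
  Nat.choose_mul hmj ▸ Nat.le_mul_of_pos_right _ (Nat.choose_pos hmj)

theorem sum_Icc_choose_mul_pow_mul_pow_le {n m : ℕ} (hmn : m ≤ n) {p q : ℝ}
    (hp : 0 ≤ p) (hq : 0 ≤ q) :
    ∑ j ∈ Icc m n, (n.choose j : ℝ) * q ^ (n - j) * p ^ j ≤
      n.choose m * p ^ m * (p + q) ^ (n - m) := by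
  calc ∑ j ∈ Icc m n, (n.choose j : ℝ) * q ^ (n - j) * p ^ j
      ≤ ∑ j ∈ Icc m n, n.choose m * p ^ m *
          (p ^ (j - m) * q ^ (n - m - (j - m)) * (n - m).choose (j - m)) := by
        refine sum_le_sum fun j hj => ?_
        have hmj : m ≤ j := (mem_Icc.mp hj).1
        have hexp : n - m - (j - m) = n - j := by omega
        rw [hexp, ← pow_sub_mul_pow p hmj]
        have hchoose : (n.choose j : ℝ) ≤ n.choose m * (n - m).choose (j - m) := by
          exact_mod_cast Nat.choose_le_choose_mul_choose hmj
        calc (n.choose j : ℝ) * q ^ (n - j) * (p ^ (j - m) * p ^ m)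
            ≤ n.choose m * (n - m).choose (j - m) * q ^ (n - j) * (p ^ (j - m) * p ^ m) := by
              gcongr
          _ = _ := by ring
    _ = n.choose m * p ^ m *
          ∑ i ∈ range (n - m + 1), p ^ i * q ^ (n - m - i) * (n - m).choose i := by
        rw [← mul_sum]
        congr 1
        refine sum_nbij' (· - m) (m + ·) ?_ ?_ ?_ ?_ ?_ <;> intro j hj <;>
          simp only [mem_Icc, mem_range] at hj ⊢ <;> omega
    _ = n.choose m * p ^ m * (p + q) ^ (n - m) := by rw [add_pow]

theorem pow_self_le_exp_one_pow_mul_factorial (m : ℕ) : (m : ℝ) ^ m ≤ exp 1 ^ m * m ! := by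
  have := pow_div_factorial_le_exp (m : ℝ) m.cast_nonneg m
  rwa [div_le_iff₀ (by positivity), ← exp_one_pow] at this

theorem choose_le_exp_one_mul_div_pow (n k : ℕ) : (n.choose k : ℝ) ≤ (exp 1 * n / k) ^ k := by
  have hk_pow : (0 : ℝ) < (k : ℝ) ^ k := by
    rcases k.eq_zero_or_pos with rfl | hk
    · simp
    · positivity
  calc (n.choose k : ℝ) ≤ n ^ k / k ! := choose_le_pow_div k n
    _ ≤ (exp 1 * n / k) ^ k := by
      rw [div_pow, mul_pow, div_le_div_iff₀ (by positivity) hk_pow]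
      calc (n : ℝ) ^ k * k ^ k ≤ n ^ k * (exp 1 ^ k * k !) := by
            gcongr; exact pow_self_le_exp_one_pow_mul_factorial k
        _ = _ := by ring

theorem Real.sinh_le_mul_exp (x : ℝ) : sinh x ≤ x * exp x := by
  have h := add_one_le_exp (-(2 * x))
  rw [sinh_eq, div_le_iff₀ two_pos]
  have : exp (-x) = exp (-(2 * x)) * exp x := by rw [← exp_add]; ring_nf
  nlinarith [exp_pos x]

theorem binomial_tail_bound_general (τ : ℝ) (hτ : 0 < τ) (k L : ℕ) (hkL : k < L) :
    ∑ j ∈ Finset.Icc (k + 1) L,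
        (L.choose j : ℝ) * Real.cosh τ ^ (L - j) * Real.sinh τ ^ j ≤
      Real.exp (τ * L) * (Real.exp 1 * L * τ / k) ^ k := by
  have hsinh : 0 ≤ sinh τ := sinh_nonneg_iff.mpr hτ.le
  have hexp : exp τ ^ k * exp τ ^ (L - k) = exp (τ * L) := by
    rw [← pow_add, Nat.add_sub_cancel' hkL.le, ← exp_nat_mul, mul_comm]
  calc ∑ j ∈ Icc (k + 1) L, (L.choose j : ℝ) * cosh τ ^ (L - j) * sinh τ ^ j
      ≤ ∑ j ∈ Icc k L, (L.choose j : ℝ) * cosh τ ^ (L - j) * sinh τ ^ j :=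
        sum_le_sum_of_subset_of_nonneg (Icc_subset_Icc k.le_succ le_rfl) fun j _ _ =>
          mul_nonneg (mul_nonneg (L.choose j).cast_nonneg (pow_nonneg (cosh_pos τ).le _))
            (pow_nonneg hsinh _)
    _ ≤ L.choose k * sinh τ ^ k * (sinh τ + cosh τ) ^ (L - k) :=
        sum_Icc_choose_mul_pow_mul_pow_le hkL.le hsinh (cosh_pos τ).le
    _ ≤ L.choose k * (τ * exp τ) ^ k * exp τ ^ (L - k) := by
        rw [sinh_add_cosh]
        gcongr
        exact sinh_le_mul_exp τ
    _ = exp (τ * L) * (L.choose k * τ ^ k) := by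
        rw [mul_pow, ← hexp]
        ring
    _ ≤ exp (τ * L) * (exp 1 * L * τ / k) ^ k := by
        gcongr
        calc (L.choose k : ℝ) * τ ^ k ≤ (exp 1 * L / k) ^ k * τ ^ k := by
              gcongr
              exact choose_le_exp_one_mul_div_pow L k
          _ = (exp 1 * L * τ / k) ^ k := by rw [← mul_pow]; ring

/-- For real `τ > 0` and positive integers `k < L`, the binomial tail
`Σ_{j=k+1}^{L} C(L,j) cosh(τ)^{L−j} sinh(τ)^j` is bounded above by
`e^{τL} · (eLτ/k)^k`, provided `k > eLτ`. -/
theorem binomial_tail_bound (τ : ℝ) (hτ : 0 < τ) (k L : ℕ) (hk : 0 < k) (hkL : k < L)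
    (hke : Real.exp 1 * L * τ < k) :
    ∑ j ∈ Finset.Icc (k + 1) L,
        (L.choose j : ℝ) * Real.cosh τ ^ (L - j) * Real.sinh τ ^ j ≤
      Real.exp (τ * L) * (Real.exp 1 * L * τ / k) ^ k :=
  binomial_tail_bound_general τ hτ k L hkL
end

section
/- For real τ > 0, integers 0 ≤ m ≤ L, and a real number q with 0 ≤ q ≤ 1, the double sum S = Σ_{r=m}^{L} C(L,r) τ^r Σ_{j=m}^{r} C(r,j) q^j satisfies S ≤ (1+τ)^L · (eLτq/m)^m whenever m > Lτq/(1+τ). -/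
/-!
Markov's trick on the binomial tail: for `t ≥ 1`, `t ^ m ≤ t ^ j` whenever `j ≥ m`, so
`t ^ m · S` is at most the full double binomial sum with `q` replaced by `t q`, which is
`(1 + τ (1 + t q)) ^ L`. The choice `t = m (1 + τ) / (L τ q)`, which is `≥ 1` exactly when
`m > L τ q / (1 + τ)`, turns this into `(1 + τ) ^ L (1 + m / L) ^ L / t ^ m`, and
`(1 + m / L) ^ L ≤ e ^ m`.
-/

open Finset

section OrderedSemiring

variable {R : Type*} [CommSemiring R] [PartialOrder R] [IsOrderedRing R]

theorem sum_Icc_choose_mul_pow_le_one_add_pow {x : R} (hx : 0 ≤ x) (m n : ℕ) :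
    ∑ j ∈ Icc m n, (n.choose j : R) * x ^ j ≤ (1 + x) ^ n := by
  calc ∑ j ∈ Icc m n, (n.choose j : R) * x ^ j
        ≤ ∑ j ∈ range (n + 1), (n.choose j : R) * x ^ j :=
        sum_le_sum_of_subset_of_nonneg
          (fun j hj ↦ mem_range.mpr (Nat.lt_succ_of_le (mem_Icc.mp hj).2))
          fun j _ _ ↦ by positivity
    _ = (1 + x) ^ n := by
        rw [add_comm 1 x, add_pow]
        exact sum_congr rfl fun j _ ↦ by ring

theorem pow_mul_sum_Icc_choose_mul_pow_le {x t : R} (hx : 0 ≤ x) (ht : 1 ≤ t) (m n : ℕ) :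
    t ^ m * ∑ j ∈ Icc m n, (n.choose j : R) * x ^ j ≤ (1 + t * x) ^ n := by
  have htx : 0 ≤ t * x := mul_nonneg (zero_le_one.trans ht) hx
  refine le_trans ?_ (sum_Icc_choose_mul_pow_le_one_add_pow htx m n)
  rw [mul_sum]
  refine sum_le_sum fun j hj ↦ ?_
  calc t ^ m * ((n.choose j : R) * x ^ j) ≤ t ^ j * ((n.choose j : R) * x ^ j) :=
        mul_le_mul_of_nonneg_right (pow_le_pow_right₀ ht (mem_Icc.mp hj).1) (by positivity)
    _ = (n.choose j : R) * (t * x) ^ j := by ring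

def doubleBinomialTail (τ q : R) (m L : ℕ) : R :=
  ∑ r ∈ Icc m L, (L.choose r : R) * τ ^ r * ∑ j ∈ Icc m r, (r.choose j : R) * q ^ j

theorem pow_mul_doubleBinomialTail_le {τ q t : R} (hτ : 0 ≤ τ) (hq : 0 ≤ q) (ht : 1 ≤ t)
    (m L : ℕ) : t ^ m * doubleBinomialTail τ q m L ≤ (1 + τ * (1 + t * q)) ^ L := by
  have htq : 0 ≤ 1 + t * q := add_nonneg zero_le_one (mul_nonneg (zero_le_one.trans ht) hq)
  refine le_trans ?_ (sum_Icc_choose_mul_pow_le_one_add_pow (mul_nonneg hτ htq) m L)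
  rw [doubleBinomialTail, mul_sum]
  refine sum_le_sum fun r _ ↦ ?_
  calc t ^ m * ((L.choose r : R) * τ ^ r * ∑ j ∈ Icc m r, (r.choose j : R) * q ^ j)
      = (L.choose r : R) * τ ^ r * (t ^ m * ∑ j ∈ Icc m r, (r.choose j : R) * q ^ j) := by ring
    _ ≤ (L.choose r : R) * τ ^ r * (1 + t * q) ^ r :=
        mul_le_mul_of_nonneg_left (pow_mul_sum_Icc_choose_mul_pow_le hq ht m r) (by positivity)
    _ = (L.choose r : R) * (τ * (1 + t * q)) ^ r := by rw [mul_pow, mul_assoc]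

end OrderedSemiring

theorem Real.one_add_div_pow_le_exp (x : ℝ) {n : ℕ} (hx : -n ≤ x) :
    (1 + x / n) ^ n ≤ Real.exp x := by
  simpa [neg_div] using Real.one_sub_div_pow_le_exp_neg (t := -x) (by linarith)

theorem doubleBinomialTail_le_one_add_pow_mul_exp_div_pow {τ q t : ℝ} (hτ : 0 ≤ τ)
    (hq : 0 ≤ q) (ht : 1 ≤ t) {m L : ℕ} (htq : τ * (t * q) = (1 + τ) * (m / L)) :
    doubleBinomialTail τ q m L ≤ (1 + τ) ^ L * (Real.exp 1 / t) ^ m := by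
  have ht0 : 0 < t := zero_lt_one.trans_le ht
  have hsplit : 1 + τ * (1 + t * q) = (1 + τ) * (1 + m / L) := by linear_combination htq
  calc doubleBinomialTail τ q m L = t ^ m * doubleBinomialTail τ q m L / t ^ m := by field_simp
    _ ≤ (1 + τ * (1 + t * q)) ^ L / t ^ m := by
        gcongr
        exact pow_mul_doubleBinomialTail_le hτ hq ht m L
    _ = (1 + τ) ^ L * (1 + m / L) ^ L / t ^ m := by rw [hsplit, mul_pow]
    _ ≤ (1 + τ) ^ L * Real.exp m / t ^ m := by
        gcongr
        exact Real.one_add_div_pow_le_exp _ (by linarith)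
    _ = (1 + τ) ^ L * (Real.exp 1 / t) ^ m := by
        rw [mul_div_assoc, ← Real.exp_one_pow, ← div_pow]

theorem double_sum_backflow_bound_general (τ q : ℝ) (hτ : 0 < τ) (hq0 : 0 ≤ q)
    (m L : ℕ) (hmL : m ≤ L) (hm : (L : ℝ) * τ * q / (1 + τ) < m) :
    ∑ r ∈ Finset.Icc m L, (L.choose r : ℝ) * τ ^ r *
        ∑ j ∈ Finset.Icc m r, (r.choose j : ℝ) * q ^ j ≤
      (1 + τ) ^ L * (Real.exp 1 * L * τ * q / m) ^ m := by
  have hm0 : (0 : ℝ) < m := lt_of_le_of_lt (by positivity) hm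
  have hL : (0 : ℝ) < L := hm0.trans_le (by exact_mod_cast hmL)
  rcases hq0.eq_or_lt with rfl | hq
  · have hm1 : 1 ≤ m := by exact_mod_cast hm0
    refine (sum_eq_zero fun r _ ↦ ?_).trans_le (by positivity)
    rw [sum_eq_zero fun j hj ↦ by rw [zero_pow (by grind), mul_zero], mul_zero]
  have hLτq : 0 < L * τ * q := by positivity
  set t : ℝ := m * (1 + τ) / (L * τ * q) with ht_def
  have ht : 1 ≤ t := (one_le_div hLτq).mpr ((div_lt_iff₀ (by positivity)).mp hm).le
  have htq : τ * (t * q) = (1 + τ) * (m / L) := by rw [ht_def]; field_simp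
  have hinv : Real.exp 1 / t ≤ Real.exp 1 * L * τ * q / m := by
    calc Real.exp 1 / t = Real.exp 1 * L * τ * q / (m * (1 + τ)) := by rw [ht_def]; field_simp
      _ ≤ Real.exp 1 * L * τ * q / m :=
        div_le_div_of_nonneg_left (by positivity) hm0 (le_mul_of_one_le_right hm0.le (by linarith))
  calc _ ≤ (1 + τ) ^ L * (Real.exp 1 / t) ^ m :=
        doubleBinomialTail_le_one_add_pow_mul_exp_div_pow hτ.le hq.le ht htq
    _ ≤ (1 + τ) ^ L * (Real.exp 1 * L * τ * q / m) ^ m := by gcongr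

/-- For real `τ > 0`, integers `0 ≤ m ≤ L`, and real `q` with `0 ≤ q ≤ 1`, the double sum
`S = Σ_{r=m}^{L} C(L,r) τ^r Σ_{j=m}^{r} C(r,j) q^j` satisfies
`S ≤ (1+τ)^L · (eLτq/m)^m` whenever `m > Lτq/(1+τ)`. -/
theorem double_sum_backflow_bound (τ q : ℝ) (hτ : 0 < τ) (hq0 : 0 ≤ q) (hq1 : q ≤ 1)
    (m L : ℕ) (hmL : m ≤ L) (hm : (L : ℝ) * τ * q / (1 + τ) < m) :
    ∑ r ∈ Finset.Icc m L, (L.choose r : ℝ) * τ ^ r *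
        ∑ j ∈ Finset.Icc m r, (r.choose j : ℝ) * q ^ j ≤
      (1 + τ) ^ L * (Real.exp 1 * L * τ * q / m) ^ m :=
  double_sum_backflow_bound_general τ q hτ hq0 m L hmL hm
end

section
/- Consider a Pauli string Q of weight w on a 1D chain of n qubits with M nearest-neighbor edges (M = n−1 open or M = n periodic). Sample an edge uniformly and a two-qubit Pauli (from 9 options) uniformly on that edge. Then the joint probability of weight-decay and commutation is at most (w−1)/(9M), the probability of anticommutation is at most 4w/(3M), and hence the conditional backflow probability Pr(Decay | Commute) ≤ (w−1)/(9M − 12w), assuming 9M > 12w. -/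
/-! Backflow bound for nearest-neighbor two-qubit Pauli gates on a 1D chain of `n`
qubits with `M` nearest-neighbor edges (`M = n−1` for an open chain, `M = n` for a
periodic one).  An edge is sampled uniformly from the `M` edges, and a non-identity
two-qubit Pauli is sampled uniformly from the `9` options on that edge. -/

/-- Encoding of a non-identity single-qubit Pauli into `Fin 4` (`0` codes identity). -/
def pcodeNN : Fin 3 → Fin 4 := Fin.succ

/-- Weight of a Pauli string `Q : Fin n → Fin 4`. -/
def pweightNN {n : ℕ} (Q : Fin n → Fin 4) : ℕ :=
  (Finset.univ.filter fun i => Q i ≠ 0).card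

/-- Number of gate sites where the gate Pauli and `Q` anticommute site-wise. -/
def anticountNN {n M : ℕ} (edges : Fin M → Fin n × Fin n) (Q : Fin n → Fin 4)
    (ω : Fin M × (Fin 3 × Fin 3)) : ℕ :=
  (if Q (edges ω.1).1 ≠ 0 ∧ Q (edges ω.1).1 ≠ pcodeNN ω.2.1 then 1 else 0) +
  (if Q (edges ω.1).2 ≠ 0 ∧ Q (edges ω.1).2 ≠ pcodeNN ω.2.2 then 1 else 0)

/-- The gate commutes with `Q`. -/
def CommutesNN {n M : ℕ} (edges : Fin M → Fin n × Fin n) (Q : Fin n → Fin 4)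
    (ω : Fin M × (Fin 3 × Fin 3)) : Prop :=
  Even (anticountNN edges Q ω)

/-- The gate reduces the weight of `Q` by two (it matches `Q` on both edge sites). -/
def DecaysNN {n M : ℕ} (edges : Fin M → Fin n × Fin n) (Q : Fin n → Fin 4)
    (ω : Fin M × (Fin 3 × Fin 3)) : Prop :=
  pcodeNN ω.2.1 = Q (edges ω.1).1 ∧ pcodeNN ω.2.2 = Q (edges ω.1).2

/-- Uniform probability of an event over the `9·M` outcomes. -/
noncomputable def unifPrNN (n M : ℕ) (Ev : Fin M × (Fin 3 × Fin 3) → Prop) : ℝ :=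
  (Nat.card {ω : Fin M × (Fin 3 × Fin 3) // Ev ω} : ℝ) / (9 * M)

/-
Sampled gates live on the cycle `i ↦ i + 1` of `Fin n`, and an edge is determined by its first
site. A decaying gate must match `Q` on both sites (one Pauli pair out of nine), so it sits on a
bulk edge `i, i + 1` with both sites in `supp Q`. Since `1 ≤ w < n`, the support is a proper
nonempty subset of the cycle, so some support site has its successor outside: fewer than `w`
bulk edges. An anticommuting gate needs a support site on its edge, and each such site spoils at
most six of the nine Pauli pairs; every site is a first endpoint of at most one edge and a
second endpoint of at most one, giving at most `12 w` anticommuting outcomes. The conditional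
bound is the ratio of the two counts.
-/

open Finset Function

lemma val_finRotate {n : ℕ} (i : Fin n) : (finRotate n i : ℕ) = (i + 1) % n := by
  have := i.neZero
  rw [finRotate_apply, Fin.val_add, Fin.val_one', Nat.add_mod_mod]

lemma exists_finRotate_iterate_eq {n : ℕ} (x y : Fin n) : ∃ k, (finRotate n)^[k] x = y := by
  have := x.neZero
  refine ⟨(y - x : Fin n), ?_⟩
  rw [← finCycle_eq_finRotate_iterate, finCycle_apply, add_sub_cancel]

lemma card_filter_and_apply_lt {α : Type*} [Fintype α] {f : α → α}
    (hf : ∀ x y, ∃ k, f^[k] x = y) {p : α → Prop} [DecidablePred p] {x y : α}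
    (hx : p x) (hy : ¬ p y) : #{i | p i ∧ p (f i)} < #{i | p i} := by
  apply card_lt_card
  rw [← filter_filter, filter_ssubset]
  by_contra! hclosed
  obtain ⟨k, rfl⟩ := hf x y
  exact hy (Set.MapsTo.iterate (s := {i | p i}) (fun i hi => hclosed i (by simpa using hi)) k hx)

lemma injective_fst_of_snd_eq {ι α : Type*} {e : ι → α × α} {f : α → α} (he : Injective e)
    (hf : ∀ m, (e m).2 = f (e m).1) : Injective fun m => (e m).1 :=
  fun a b h => he (Prod.ext h (by rw [hf, hf]; exact congrArg f h))

lemma card_filter_comp_le {ι α : Type*} [Fintype ι] [Fintype α] {g : ι → α}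
    (hg : Injective g) (p : α → Prop) [DecidablePred p] : #{m | p (g m)} ≤ #{a | p a} :=
  card_le_card_of_injOn g (fun m hm => by simpa using hm) hg.injOn

lemma card_filter_prod_le_sum {α β : Type*} [Fintype α] [Fintype β] {p : α × β → Prop}
    [DecidablePred p] {g : α → ℕ} (h : ∀ a, #{b | p (a, b)} ≤ g a) : #{x | p x} ≤ ∑ a, g a := by
  rw [card_filter, Fintype.sum_prod_type]
  exact sum_le_sum fun a _ => (card_filter _ _).symm.trans_le (h a)

lemma card_pcodeNN_eq_le (u v : Fin 4) :
    #{p : Fin 3 × Fin 3 | pcodeNN p.1 = u ∧ pcodeNN p.2 = v} ≤ if u ≠ 0 ∧ v ≠ 0 then 1 else 0 := by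
  decide +revert

lemma card_odd_anticount_le (u v : Fin 4) :
    #{p : Fin 3 × Fin 3 | ¬ Even ((if u ≠ 0 ∧ u ≠ pcodeNN p.1 then 1 else 0) +
      (if v ≠ 0 ∧ v ≠ pcodeNN p.2 then 1 else 0))} ≤
      6 * ((if u ≠ 0 then 1 else 0) + (if v ≠ 0 then 1 else 0)) := by
  decide +revert

lemma unifPrNN_eq (n M : ℕ) (p : Fin M × (Fin 3 × Fin 3) → Prop) [DecidablePred p] :
    unifPrNN n M p = (#{ω | p ω} : ℝ) / (9 * M) := by
  rw [unifPrNN, Nat.card_eq_fintype_card, Fintype.card_subtype]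

lemma unifPrNN_bounds_of_card_le {n M w : ℕ} {p c : Fin M × (Fin 3 × Fin 3) → Prop}
    [DecidablePred p] [DecidablePred c] (hden : 12 * (w : ℝ) < 9 * M)
    (hp : #{ω | p ω} < w) (hc : #{ω | ¬ c ω} ≤ 12 * w) :
    unifPrNN n M p ≤ ((w : ℝ) - 1) / (9 * M) ∧
      unifPrNN n M (fun ω => ¬ c ω) ≤ 4 * w / (3 * M) ∧
      unifPrNN n M p / unifPrNN n M c ≤ ((w : ℝ) - 1) / (9 * M - 12 * w) := by
  have hM : (0 : ℝ) < 9 * M := by linarith [(Nat.cast_nonneg w : (0 : ℝ) ≤ w)]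
  have hp' : (#{ω | p ω} : ℝ) ≤ w - 1 := by
    have : (#{ω | p ω} + 1 : ℝ) ≤ w := by exact_mod_cast hp
    linarith
  have hc' : (#{ω | ¬ c ω} : ℝ) ≤ 12 * w := by exact_mod_cast hc
  have htot : (#{ω | c ω} + #{ω | ¬ c ω} : ℝ) = 9 * M := by
    exact_mod_cast (card_filter_add_card_filter_not c).trans (by simp [mul_comm])
  simp only [unifPrNN_eq]
  refine ⟨div_le_div_of_nonneg_right hp' hM.le,
    (div_le_div_of_nonneg_right hc' hM.le).trans_eq (by field_simp; ring), ?_⟩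
  rw [div_div_div_cancel_right₀ hM.ne']
  exact div_le_div₀ (by linarith) hp' (by linarith) (by linarith)

section Chain

variable {n M : ℕ} (edges : Fin M → Fin n × Fin n) (Q : Fin n → Fin 4)

instance : DecidablePred (DecaysNN edges Q) := fun _ => inferInstanceAs (Decidable (_ ∧ _))

instance : DecidablePred (CommutesNN edges Q) := fun _ => inferInstanceAs (Decidable (Even _))

lemma card_decaysNN_le_card_bulk :
    #{ω | DecaysNN edges Q ω} ≤ #{m | Q (edges m).1 ≠ 0 ∧ Q (edges m).2 ≠ 0} :=
  (card_filter_prod_le_sum (p := DecaysNN edges Q) fun m =>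
    card_pcodeNN_eq_le (Q (edges m).1) (Q (edges m).2)).trans_eq (card_filter _ _).symm

lemma card_not_commutesNN_le (h₁ : Injective fun m => (edges m).1)
    (h₂ : Injective fun m => (edges m).2) : #{ω | ¬ CommutesNN edges Q ω} ≤ 12 * pweightNN Q := by
  have hsum := card_filter_prod_le_sum (p := fun ω => ¬ CommutesNN edges Q ω) fun m =>
    card_odd_anticount_le (Q (edges m).1) (Q (edges m).2)
  rw [← mul_sum, sum_add_distrib, ← card_filter, ← card_filter] at hsum
  have := card_filter_comp_le h₁ (Q · ≠ 0)
  have := card_filter_comp_le h₂ (Q · ≠ 0)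
  unfold pweightNN
  exact hsum.trans (by omega)

lemma card_bulk_edges_lt (hsnd : ∀ m, (edges m).2 = finRotate n (edges m).1)
    (hfst : Injective fun m => (edges m).1) (hpos : 0 < pweightNN Q) (hlt : pweightNN Q < n) :
    #{m | Q (edges m).1 ≠ 0 ∧ Q (edges m).2 ≠ 0} < pweightNN Q := by
  obtain ⟨x, hx⟩ := card_pos.mp hpos
  obtain ⟨y, -, hy⟩ := exists_mem_notMem_of_card_lt_card (s := {i | Q i ≠ 0}) (t := univ)
    (by simpa [pweightNN] using hlt)
  simp only [hsnd]
  exact (card_filter_comp_le hfst (fun i => Q i ≠ 0 ∧ Q (finRotate n i) ≠ 0)).trans_lt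
    (card_filter_and_apply_lt exists_finRotate_iterate_eq (mem_filter.mp hx).2
      (by simpa [pweightNN] using hy))

lemma card_decaysNN_commutesNN_lt (hsnd : ∀ m, (edges m).2 = finRotate n (edges m).1)
    (hfst : Injective fun m => (edges m).1) (hpos : 0 < pweightNN Q) (hlt : pweightNN Q < n) :
    #{ω | DecaysNN edges Q ω ∧ CommutesNN edges Q ω} < pweightNN Q :=
  ((card_le_card (monotone_filter_right _ fun _ _ => And.left)).trans
    (card_decaysNN_le_card_bulk edges Q)).trans_lt (card_bulk_edges_lt edges Q hsnd hfst hpos hlt)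

end Chain

theorem backflow_nearest_neighbor_general (n M : ℕ)
    (edges : Fin M → Fin n × Fin n)
    (hadj : ∀ m, ((edges m).2 : ℕ) = (((edges m).1 : ℕ) + 1) % n)
    (hinj : Function.Injective edges)
    (Q : Fin n → Fin 4) (w : ℕ) (hw : pweightNN Q = w) (hw1 : 1 ≤ w)
    (hden : 12 * (w : ℝ) < 9 * M) :
    unifPrNN n M (fun ω => DecaysNN edges Q ω ∧ CommutesNN edges Q ω) ≤
        ((w : ℝ) - 1) / (9 * M) ∧
      unifPrNN n M (fun ω => ¬ CommutesNN edges Q ω) ≤ 4 * w / (3 * M) ∧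
      unifPrNN n M (fun ω => DecaysNN edges Q ω ∧ CommutesNN edges Q ω) /
          unifPrNN n M (CommutesNN edges Q) ≤
        ((w : ℝ) - 1) / (9 * M - 12 * w) := by
  subst hw
  have hsnd : ∀ m, (edges m).2 = finRotate n (edges m).1 :=
    fun m => Fin.ext (by rw [hadj, val_finRotate])
  have hfst : Injective fun m => (edges m).1 := injective_fst_of_snd_eq hinj hsnd
  have hsnd_inj : Injective fun m => (edges m).2 := by
    simp only [hsnd]
    exact (finRotate n).injective.comp hfst
  have hMn : M ≤ n := by simpa using Fintype.card_le_of_injective _ hfst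
  have hwn : pweightNN Q < n := by
    have : (M : ℝ) ≤ n := by exact_mod_cast hMn
    exact_mod_cast (by linarith : (pweightNN Q : ℝ) < n)
  exact unifPrNN_bounds_of_card_le hden
    (card_decaysNN_commutesNN_lt edges Q hsnd hfst hw1 hwn)
    (card_not_commutesNN_le edges Q hfst hsnd_inj)

/-- Backflow bound for nearest-neighbor gates: for a Pauli string of weight `w ≥ 1` on a
chain of `n` qubits with `M` edges (`M = n−1` open or `M = n` periodic),
`Pr(Decay ∩ Commute) ≤ (w−1)/(9M)`, `Pr(Anticommute) ≤ 4w/(3M)`, and hence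
`Pr(Decay | Commute) ≤ (w−1)/(9M − 12w)` whenever `9M > 12w`. -/
theorem backflow_nearest_neighbor (n M : ℕ) (hn : 2 < n)
    (hM : M = n - 1 ∨ M = n)
    (edges : Fin M → Fin n × Fin n)
    (hadj : ∀ m, ((edges m).2 : ℕ) = (((edges m).1 : ℕ) + 1) % n)
    (hinj : Function.Injective edges)
    (Q : Fin n → Fin 4) (w : ℕ) (hw : pweightNN Q = w) (hw1 : 1 ≤ w)
    (hden : 12 * (w : ℝ) < 9 * M) :
    unifPrNN n M (fun ω => DecaysNN edges Q ω ∧ CommutesNN edges Q ω) ≤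
        ((w : ℝ) - 1) / (9 * M) ∧
      unifPrNN n M (fun ω => ¬ CommutesNN edges Q ω) ≤ 4 * w / (3 * M) ∧
      unifPrNN n M (fun ω => DecaysNN edges Q ω ∧ CommutesNN edges Q ω) /
          unifPrNN n M (CommutesNN edges Q) ≤
        ((w : ℝ) - 1) / (9 * M - 12 * w) :=
  backflow_nearest_neighbor_general n M edges hadj hinj Q w hw hw1 hden
end
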